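/- arXiv:1406.2245 — 6 statements merged into one kernel-verified Lean document; each statement's English description precedes it below -/
import Mathlib

section
/- Let L ⊂ ℝⁿ be a finite set of landmarks and α > 0. The collection of α-cells A_l(α) = B̄_α(l) ∩ { x : d(x,l) ≤ d(x,l') for all l' ∈ L } is a grid on its union: the cells are nonempty compact sets, each cell equals the closure of its interior, distinct cells have disjoint interiors, and any compact subset of the union is covered by finitely many cells. -/
/-!
Since `dist x m ^ 2 - dist x l ^ 2` is affine in `x`, each condition `dist x l ≤ dist x m` cuts
out a closed half-space, so an α-cell is a closed ball intersected with finitely many closed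
half-spaces: a compact convex set. It is a neighbourhood of its own landmark, and a convex set
with nonempty interior is the closure of its interior. A point of the cell of `l` is at least as
close to `l` as to `m`, while the interior of the half-space `dist x m ≤ dist x l` is the open one
`dist x m < dist x l`; hence distinct cells have disjoint interiors.
-/

open Metric Set Filter Topology
open scoped RealInnerProductSpace

section Bisector

variable {E : Type*} [NormedAddCommGroup E] [InnerProductSpace ℝ E]

theorem dist_sq_sub_dist_sq (x l m : E) :
    dist x m ^ 2 - dist x l ^ 2 = ‖m‖ ^ 2 - ‖l‖ ^ 2 - 2 * ⟪m - l, x⟫ := by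
  rw [dist_eq_norm, dist_eq_norm, norm_sub_sq_real, norm_sub_sq_real, inner_sub_left,
    real_inner_comm x m, real_inner_comm x l]
  ring

theorem setOf_dist_le_dist_eq_preimage (l m : E) :
    {x | dist x l ≤ dist x m} = innerSL ℝ (m - l) ⁻¹' Iic ((‖m‖ ^ 2 - ‖l‖ ^ 2) / 2) := by
  ext x
  have := dist_sq_sub_dist_sq x l m
  simp only [mem_ofPred_eq, mem_preimage, innerSL_apply_apply, mem_Iic]
  rw [← sq_le_sq₀ dist_nonneg dist_nonneg]
  constructor <;> intro h <;> linarith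

theorem convex_setOf_dist_le_dist (l m : E) : Convex ℝ {x | dist x l ≤ dist x m} := by
  rw [setOf_dist_le_dist_eq_preimage]
  exact (convex_Iic _).linear_preimage (innerSL ℝ (m - l)).toLinearMap

theorem interior_setOf_dist_le_dist {l m : E} (h : l ≠ m) :
    interior {x | dist x l ≤ dist x m} = {x | dist x l < dist x m} := by
  have hφ : innerSL ℝ (m - l) ≠ 0 := by
    rw [← norm_ne_zero_iff, innerSL_apply_norm, norm_ne_zero_iff, sub_ne_zero]
    exact h.symm
  rw [setOf_dist_le_dist_eq_preimage, ← ((innerSL ℝ (m - l)).isOpenMap_of_ne_zero hφ)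
    |>.preimage_interior_eq_interior_preimage (innerSL ℝ (m - l)).continuous, interior_Iic]
  ext x
  have := dist_sq_sub_dist_sq x l m
  simp only [mem_ofPred_eq, mem_preimage, innerSL_apply_apply, mem_Iio]
  rw [← sq_lt_sq₀ dist_nonneg dist_nonneg]
  constructor <;> intro h <;> linarith

end Bisector

section Cells

variable {X : Type*} [MetricSpace X] {α : ℝ}

def voronoiCell (L : Finset X) (l : X) : Set X := {x | ∀ l' ∈ L, dist x l ≤ dist x l'}

def alphaCell (L : Finset X) (α : ℝ) (l : X) : Set X := closedBall l α ∩ voronoiCell L l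

theorem voronoiCell_eq_biInter (L : Finset X) (l : X) :
    voronoiCell L l = ⋂ l' ∈ L, {x | dist x l ≤ dist x l'} := by
  ext x
  simp [voronoiCell]

theorem isClosed_voronoiCell (L : Finset X) (l : X) : IsClosed (voronoiCell L l) := by
  rw [voronoiCell_eq_biInter]
  exact isClosed_biInter fun l' _ => isClosed_le (by fun_prop) (by fun_prop)

theorem voronoiCell_mem_nhds (L : Finset X) (l : X) : voronoiCell L l ∈ 𝓝 l := by
  rw [voronoiCell_eq_biInter, Filter.biInter_finset_mem]
  intro l' _
  rcases eq_or_ne l l' with rfl | hne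
  · simp
  · have hlt : dist l l < dist l l' := by simpa using dist_pos.2 hne
    have hd (p : X) : Continuous fun x => dist x p := continuous_id.dist continuous_const
    filter_upwards [(hd l).continuousAt.eventually_lt (hd l').continuousAt hlt] with x hx
    exact hx.le

theorem isClosed_alphaCell (L : Finset X) (α : ℝ) (l : X) : IsClosed (alphaCell L α l) :=
  isClosed_closedBall.inter (isClosed_voronoiCell L l)

theorem isCompact_alphaCell [ProperSpace X] (L : Finset X) (α : ℝ) (l : X) :
    IsCompact (alphaCell L α l) :=
  (isCompact_closedBall l α).inter_right (isClosed_voronoiCell L l)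

theorem alphaCell_mem_nhds (L : Finset X) (hα : 0 < α) (l : X) : alphaCell L α l ∈ 𝓝 l :=
  Filter.inter_mem (closedBall_mem_nhds l hα) (voronoiCell_mem_nhds L l)

end Cells

section EuclideanCells

variable {E : Type*} [NormedAddCommGroup E] [InnerProductSpace ℝ E] {L : Finset E} {α : ℝ}
  {l m : E}

theorem convex_voronoiCell (L : Finset E) (l : E) : Convex ℝ (voronoiCell L l) := by
  rw [voronoiCell_eq_biInter]
  exact convex_iInter₂ fun l' _ => convex_setOf_dist_le_dist l l'

theorem convex_alphaCell (L : Finset E) (α : ℝ) (l : E) : Convex ℝ (alphaCell L α l) :=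
  (convex_closedBall l α).inter (convex_voronoiCell L l)

theorem closure_interior_alphaCell (L : Finset E) (hα : 0 < α) (l : E) :
    closure (interior (alphaCell L α l)) = alphaCell L α l := by
  rw [(convex_alphaCell L α l).closure_interior_eq_closure_of_nonempty_interior
    ⟨l, mem_interior_iff_mem_nhds.2 (alphaCell_mem_nhds L hα l)⟩,
    (isClosed_alphaCell L α l).closure_eq]

theorem disjoint_voronoiCell_interior_voronoiCell (hl : l ∈ L) (hm : m ∈ L) (h : l ≠ m) :
    Disjoint (voronoiCell L l) (interior (voronoiCell L m)) := by
  refine Set.disjoint_left.2 fun x hxl hxm => ?_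
  have hsub : voronoiCell L m ⊆ {y | dist y m ≤ dist y l} := fun y hy => hy l hl
  have hlt : dist x m < dist x l := by
    simpa [interior_setOf_dist_le_dist h.symm] using interior_mono hsub hxm
  exact (hxl m hm).not_gt hlt

theorem disjoint_alphaCell_interior_alphaCell (hl : l ∈ L) (hm : m ∈ L) (h : l ≠ m) :
    Disjoint (alphaCell L α l) (interior (alphaCell L α m)) :=
  (disjoint_voronoiCell_interior_voronoiCell hl hm h).mono inter_subset_right
    (interior_mono inter_subset_right)

end EuclideanCells

theorem alpha_cells_form_grid_general
    {n : ℕ} (L : Finset (EuclideanSpace ℝ (Fin n)))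
    (α : ℝ) (hα : 0 < α) :
    (∀ l ∈ L,
        ((Metric.closedBall l α ∩
            {x | ∀ l' ∈ L, dist x l ≤ dist x l'}).Nonempty ∧
          IsCompact (Metric.closedBall l α ∩
            {x | ∀ l' ∈ L, dist x l ≤ dist x l'}))) ∧
    (∀ l ∈ L,
        Metric.closedBall l α ∩ {x | ∀ l' ∈ L, dist x l ≤ dist x l'} =
          closure (interior (Metric.closedBall l α ∩
            {x | ∀ l' ∈ L, dist x l ≤ dist x l'}))) ∧
    (∀ l ∈ L, ∀ m ∈ L, l ≠ m →
        (Metric.closedBall l α ∩ {x | ∀ l' ∈ L, dist x l ≤ dist x l'}) ∩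
          interior (Metric.closedBall m α ∩
            {x | ∀ l' ∈ L, dist x m ≤ dist x l'}) = ∅) ∧
    (∀ S : Set (EuclideanSpace ℝ (Fin n)), IsCompact S →
        S ⊆ (⋃ l ∈ L, Metric.closedBall l α ∩
            {x | ∀ l' ∈ L, dist x l ≤ dist x l'}) →
        ∃ L' ⊆ L, (L' : Set (EuclideanSpace ℝ (Fin n))).Finite ∧
          S ⊆ ⋃ l ∈ L', Metric.closedBall l α ∩
            {x | ∀ l' ∈ L, dist x l ≤ dist x l'}) := by
  change (∀ l ∈ L, (alphaCell L α l).Nonempty ∧ IsCompact (alphaCell L α l)) ∧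
    (∀ l ∈ L, alphaCell L α l = closure (interior (alphaCell L α l))) ∧
    (∀ l ∈ L, ∀ m ∈ L, l ≠ m → alphaCell L α l ∩ interior (alphaCell L α m) = ∅) ∧
    (∀ S, IsCompact S → S ⊆ ⋃ l ∈ L, alphaCell L α l →
      ∃ L' ⊆ L, (L' : Set (EuclideanSpace ℝ (Fin n))).Finite ∧ S ⊆ ⋃ l ∈ L', alphaCell L α l)
  refine ⟨fun l _ => ⟨⟨l, mem_of_mem_nhds (alphaCell_mem_nhds L hα l)⟩, isCompact_alphaCell L α l⟩,
    fun l _ => (closure_interior_alphaCell L hα l).symm,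
    fun l hl m hm h => (disjoint_alphaCell_interior_alphaCell hl hm h).inter_eq,
    fun S _ hS => ⟨L, subset_rfl, L.finite_toSet, hS⟩⟩

/-- For a finite set of landmarks `L ⊂ ℝⁿ` and `α > 0`, the
collection of α-cells `A_l(α) = B̄_α(l) ∩ V_l` is a grid on its union:
the cells are nonempty compact sets, each cell equals the closure of its
interior, distinct cells have disjoint interiors, and any compact subset of
the union is covered by finitely many cells. -/
theorem alpha_cells_form_grid
    {n : ℕ} (L : Finset (EuclideanSpace ℝ (Fin n))) (hL : L.Nonempty)
    (α : ℝ) (hα : 0 < α) :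
    (∀ l ∈ L,
        ((Metric.closedBall l α ∩
            {x | ∀ l' ∈ L, dist x l ≤ dist x l'}).Nonempty ∧
          IsCompact (Metric.closedBall l α ∩
            {x | ∀ l' ∈ L, dist x l ≤ dist x l'}))) ∧
    (∀ l ∈ L,
        Metric.closedBall l α ∩ {x | ∀ l' ∈ L, dist x l ≤ dist x l'} =
          closure (interior (Metric.closedBall l α ∩
            {x | ∀ l' ∈ L, dist x l ≤ dist x l'}))) ∧
    (∀ l ∈ L, ∀ m ∈ L, l ≠ m →
        (Metric.closedBall l α ∩ {x | ∀ l' ∈ L, dist x l ≤ dist x l'}) ∩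
          interior (Metric.closedBall m α ∩
            {x | ∀ l' ∈ L, dist x m ≤ dist x l'}) = ∅) ∧
    (∀ S : Set (EuclideanSpace ℝ (Fin n)), IsCompact S →
        S ⊆ (⋃ l ∈ L, Metric.closedBall l α ∩
            {x | ∀ l' ∈ L, dist x l ≤ dist x l'}) →
        ∃ L' ⊆ L, (L' : Set (EuclideanSpace ℝ (Fin n))).Finite ∧
          S ⊆ ⋃ l ∈ L', Metric.closedBall l α ∩
            {x | ∀ l' ∈ L, dist x l ≤ dist x l'}) :=
  alpha_cells_form_grid_general L α hα
end

section
/- Let Γ and L be finite subsets of ℝⁿ, α > 0, ε > 0. Suppose Γ is δ-dense in the union of the α-cells |𝒜_α(L)| (every point of |𝒜_α(L)| is within distance δ of some point of Γ) with δ ≤ ε/2. Then every simplex of the α-complex 𝒦_α(L) belongs to the fuzzy witness clique complex 𝒲_ε(Γ,L); more precisely, if σ ⊆ L admits a point y ∈ |𝒜_α(L)| with d(y, l) = d(y, L) ≤ α for all l ∈ σ, then there exists x ∈ Γ with d(x, l) ≤ d(x, L) + ε for all l ∈ σ. -/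
/-- α-complex ⊆ fuzzy witness complex: if `Γ` is δ-dense on the
union of the α-cells and `δ ≤ ε/2`, then any simplex `σ ⊆ L` of the α-complex
(i.e. admitting `y` in the α-shape with `d(y,l) = d(y,L) ≤ α` for all `l ∈ σ`)
has a common ε-fuzzy witness `x ∈ Γ`: `d(x,l) ≤ d(x,L) + ε` for all `l ∈ σ`. -/
theorem alpha_complex_subset_witness_complex
    {n : ℕ} (Γ L : Finset (EuclideanSpace ℝ (Fin n))) (hL : L.Nonempty)
    (α ε δ : ℝ) (hα : 0 < α) (hε : 0 < ε) (hδpos : 0 < δ)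
    (hdense : ∀ y ∈ ⋃ l ∈ L, Metric.closedBall l α ∩
        {x | ∀ l' ∈ L, dist x l ≤ dist x l'},
      ∃ x ∈ Γ, dist y x ≤ δ)
    (hδ : δ ≤ ε / 2)
    (σ : Finset (EuclideanSpace ℝ (Fin n))) (hσL : σ ⊆ L)
    (y : EuclideanSpace ℝ (Fin n))
    (hy : y ∈ ⋃ l ∈ L, Metric.closedBall l α ∩
        {x | ∀ l' ∈ L, dist x l ≤ dist x l'})
    (hyσ : ∀ l ∈ σ, dist y l = L.inf' hL (fun l' => dist y l'))
    (hyα : L.inf' hL (fun l' => dist y l') ≤ α) :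
    ∃ x ∈ Γ, ∀ l ∈ σ, dist x l ≤ L.inf' hL (fun l' => dist x l') + ε := by
  obtain ⟨x, hxΓ, hyx⟩ := hdense y hy
  refine ⟨x, hxΓ, fun l hl => ?_⟩
  -- inf over L at y is ≤ inf at x plus dist x y
  obtain ⟨l₀, hl₀L, hl₀⟩ := Finset.exists_mem_eq_inf' hL (fun l' => dist x l')
  have h1 : L.inf' hL (fun l' => dist y l') ≤ L.inf' hL (fun l' => dist x l') + dist y x := by
    rw [hl₀]
    calc L.inf' hL (fun l' => dist y l') ≤ dist y l₀ := Finset.inf'_le _ hl₀L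
      _ ≤ dist y x + dist x l₀ := dist_triangle _ _ _
      _ = dist x l₀ + dist y x := by ring
  calc dist x l ≤ dist x y + dist y l := dist_triangle _ _ _
    _ = dist y x + L.inf' hL (fun l' => dist y l') := by rw [hyσ l hl, dist_comm]
    _ ≤ dist y x + (L.inf' hL (fun l' => dist x l') + dist y x) := by linarith
    _ ≤ L.inf' hL (fun l' => dist x l') + ε := by linarith
end

section
/- Let L ⊂ ℝⁿ be finite, Γ ⊂ ℝⁿ finite, ε > 0, M = max_{x∈Γ} d(x,L), and β = min_{i≠j} d(l_i,l_j). Suppose α satisfies M + ε ≤ α ≤ β/√2. If two landmarks l₁, l₂ ∈ L share an ε-fuzzy witness x ∈ Γ (i.e., d(x,l_i) ≤ d(x,L) + ε for i = 1,2), then the midpoint y = (l₁ + l₂)/2 satisfies d(y, l₁) = d(y, l₂) = d(y, L) ≤ α; in particular ⟨l₁,l₂⟩ is an edge of the α-complex 𝒦_α(L). -/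
/-- witness edge ⊆ α-complex edge: with `M ≥ d(x,L)` for every
`x ∈ Γ` (`M = max_{x∈Γ} d(x,L)`), `β ≤ d(l,l')` for all distinct landmarks
(`β = min` pairwise distance), and `M + ε ≤ α ≤ β/√2`: if two distinct
landmarks `l₁, l₂` share an ε-fuzzy witness `x ∈ Γ`, then the midpoint
`y = (l₁+l₂)/2` satisfies `d(y,l₁) = d(y,l₂) = d(y,L) ≤ α`, so `⟨l₁,l₂⟩` is
an edge of the α-complex `𝒦_α(L)`. -/
theorem witness_edge_in_alpha_complex
    {n : ℕ} (Γ L : Finset (EuclideanSpace ℝ (Fin n)))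
    (hL : L.Nonempty) (hΓ : Γ.Nonempty)
    (ε α M β : ℝ) (hε : 0 < ε)
    (hM : M = Γ.sup' hΓ (fun x => L.inf' hL (fun l => dist x l)))
    (hβ : ∀ l ∈ L, ∀ l' ∈ L, l ≠ l' → β ≤ dist l l')
    (hMα : M + ε ≤ α) (hαβ : α ≤ β / Real.sqrt 2)
    (l₁ l₂ : EuclideanSpace ℝ (Fin n)) (hl₁ : l₁ ∈ L) (hl₂ : l₂ ∈ L)
    (hne : l₁ ≠ l₂)
    (x : EuclideanSpace ℝ (Fin n)) (hx : x ∈ Γ)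
    (hw₁ : dist x l₁ ≤ L.inf' hL (fun l => dist x l) + ε)
    (hw₂ : dist x l₂ ≤ L.inf' hL (fun l => dist x l) + ε) :
    dist (midpoint ℝ l₁ l₂) l₁ = L.inf' hL (fun l => dist (midpoint ℝ l₁ l₂) l) ∧
    dist (midpoint ℝ l₁ l₂) l₂ = L.inf' hL (fun l => dist (midpoint ℝ l₁ l₂) l) ∧
    L.inf' hL (fun l => dist (midpoint ℝ l₁ l₂) l) ≤ α := by
  set y := midpoint ℝ l₁ l₂ with hy
  have hr₁ : dist y l₁ = dist l₁ l₂ / 2 := by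
    rw [hy, dist_midpoint_left]; norm_num; ring
  have hr₂ : dist y l₂ = dist l₁ l₂ / 2 := by
    rw [hy, dist_midpoint_right]; norm_num; ring
  set r := dist l₁ l₂ / 2 with hrdef
  have hr0 : 0 ≤ r := by positivity
  -- d(x,L) ≤ M
  have hdxM : L.inf' hL (fun l => dist x l) ≤ M := by
    rw [hM]; exact Finset.le_sup' (fun x => L.inf' hL fun l => dist x l) hx
  -- r ≤ α
  have hrα : r ≤ α := by
    have htri : dist l₁ l₂ ≤ dist x l₁ + dist x l₂ := by
      rw [dist_comm x l₁]; exact dist_triangle l₁ x l₂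
    have : dist l₁ l₂ ≤ 2 * (M + ε) := by
      calc dist l₁ l₂ ≤ dist x l₁ + dist x l₂ := htri
        _ ≤ (L.inf' hL (fun l => dist x l) + ε) + (L.inf' hL (fun l => dist x l) + ε) :=
            add_le_add hw₁ hw₂
        _ ≤ 2 * (M + ε) := by linarith
    calc r ≤ M + ε := by rw [hrdef]; linarith
      _ ≤ α := hMα
  -- 2 r² ≤ β²
  have hs : Real.sqrt 2 > 0 := by positivity
  have hαs : α * Real.sqrt 2 ≤ β := (le_div_iff₀ hs).mp hαβ
  have hrs : r * Real.sqrt 2 ≤ β := by nlinarith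
  have hβ0 : 0 ≤ β := le_trans (by positivity) hrs
  have h2r : 2 * r ^ 2 ≤ β ^ 2 := by
    have hmul : (r * Real.sqrt 2) * (r * Real.sqrt 2) ≤ β * β :=
      mul_le_mul hrs hrs (by positivity) hβ0
    have hs2 : Real.sqrt 2 * Real.sqrt 2 = 2 := Real.mul_self_sqrt (by norm_num)
    nlinarith [hmul, hs2]
  -- every landmark is at distance ≥ r from y
  have hmin : ∀ l ∈ L, r ≤ dist y l := by
    intro l hl
    by_cases h1 : l = l₁
    · rw [h1, ← hr₁]
    by_cases h2 : l = l₂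
    · rw [h2, ← hr₂]
    · have hb1 : β ≤ dist l l₁ := hβ l hl l₁ hl₁ h1
      have hb2 : β ≤ dist l l₂ := hβ l hl l₂ hl₂ h2
      have hap := EuclideanGeometry.dist_sq_add_dist_sq_eq_two_mul_dist_midpoint_sq_add_half_dist_sq l l₁ l₂
      have hsq : r ^ 2 ≤ dist l y ^ 2 := by
        rw [← hy] at hap
        nlinarith [dist_nonneg (x := l) (y := l₁), dist_nonneg (x := l) (y := l₂)]
      rw [dist_comm]
      nlinarith [dist_nonneg (x := l) (y := y), hsq, hr0]
  have hinf : L.inf' hL (fun l => dist y l) = r := by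
    apply le_antisymm
    · calc L.inf' hL (fun l => dist y l) ≤ dist y l₁ := Finset.inf'_le _ hl₁
        _ = r := hr₁
    · exact Finset.le_inf' _ _ hmin
  exact ⟨by rw [hinf, hr₁], by rw [hinf, hr₂], by rw [hinf]; exact hrα⟩
end

section
/- Let l₁, l₂, l₃ ∈ ℝⁿ with ‖l₃ − l₁‖ ≥ β and ‖l₃ − l₂‖ ≥ β, and let y = (l₁+l₂)/2 be the midpoint of l₁ and l₂. If ‖y − l₁‖ ≤ β/√2, then ‖y − l₃‖ ≥ ‖y − l₁‖. -/
/-- geometric core: if `l₃` is at distance at least `β` from both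
`l₁` and `l₂`, and the midpoint `y = (l₁+l₂)/2` satisfies `‖y−l₁‖ ≤ β/√2`,
then `‖y−l₃‖ ≥ ‖y−l₁‖`. -/
theorem midpoint_far_from_third_landmark
    {n : ℕ} (l₁ l₂ l₃ : EuclideanSpace ℝ (Fin n)) (β : ℝ) (hβ : 0 < β)
    (h₁ : β ≤ ‖l₃ - l₁‖) (h₂ : β ≤ ‖l₃ - l₂‖)
    (hhalf : ‖midpoint ℝ l₁ l₂ - l₁‖ ≤ β / Real.sqrt 2) :
    ‖midpoint ℝ l₁ l₂ - l₁‖ ≤ ‖midpoint ℝ l₁ l₂ - l₃‖ := by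
  set y := midpoint ℝ l₁ l₂ with hy
  have hpar := parallelogram_law_with_norm ℝ (l₃ - y) (y - l₁)
  have e1 : (l₃ - y) + (y - l₁) = l₃ - l₁ := by abel
  have hsum : y + y = l₁ + l₂ := midpoint_add_self ℝ l₁ l₂
  have e2 : (l₃ - y) - (y - l₁) = l₃ - l₂ := by
    have : l₂ = l₁ + l₂ - l₂ + l₂ - l₁ := by abel
    rw [← hsum] at this; rw [this]; abel
  rw [e1, e2] at hpar
  have hs : ‖y - l₁‖ ^ 2 ≤ β ^ 2 / 2 := by
    have h2 : Real.sqrt 2 > 0 := by positivity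
    have hsq : (Real.sqrt 2) ^ 2 = 2 := Real.sq_sqrt (by norm_num)
    have hp := pow_le_pow_left₀ (norm_nonneg (y - l₁)) hhalf 2
    rwa [div_pow, hsq] at hp
  have h3 : ‖y - l₃‖ = ‖l₃ - y‖ := norm_sub_rev _ _
  nlinarith [norm_nonneg (l₃ - y), norm_nonneg (y - l₁), sq_nonneg (‖l₃ - l₁‖ - β), sq_nonneg (‖l₃ - l₂‖ - β)]
end

section
/- Let f : Y → Y be Lipschitz with constant c on a compact set Y = |𝒜_α(L)| ⊂ ℝⁿ, and let Γ = {x₀,…,x_{T−1}} be a trajectory of f (x_{t+1} = f(x_t)) that is δ-dense in Y with δ ≤ (ε/2)·min{1, 1/c}. Then for every y ∈ Y there exists x_t ∈ Γ such that x_t is an ε-fuzzy witness of every landmark l with y ∈ A_l(α), and f(x_t) = x_{t+1} is an ε-fuzzy witness of every landmark l' with f(y) ∈ A_{l'}(α). Consequently the cellular witness map F_𝒲 is an outer approximation of f. -/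
/-- the witness map is an outer approximation: let `f` be
Lipschitz with constant `c` on the compact α-shape `Y = |𝒜_α(L)|`, and let
`x₀, …, x_{T−1}` be a trajectory of `f` that is δ-dense in `Y` with
`δ ≤ (ε/2)·min{1, 1/c}`.  Then for every `y ∈ Y` there is a `t` with
`t + 1 < T` such that `x_t` is an ε-fuzzy witness of every landmark whose
α-cell contains `y` and `x_{t+1} = f(x_t)` is an ε-fuzzy witness of every
landmark whose α-cell contains `f(y)`; consequently
`f(y) ∈ F_𝒲(y)`, i.e. the cellular witness map is an outer approximation. -/
theorem witness_map_outer_approximation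
    {n : ℕ} (L : Finset (EuclideanSpace ℝ (Fin n))) (hL : L.Nonempty)
    (α ε δ c : ℝ) (hα : 0 < α) (hε : 0 < ε) (hδpos : 0 < δ) (hc : 0 < c)
    (A : EuclideanSpace ℝ (Fin n) → Set (EuclideanSpace ℝ (Fin n)))
    (hA : ∀ l, A l = Metric.closedBall l α ∩ {x | ∀ l' ∈ L, dist x l ≤ dist x l'})
    (Y : Set (EuclideanSpace ℝ (Fin n))) (hY : Y = ⋃ l ∈ L, A l)
    (hYcpt : IsCompact Y)
    (f : EuclideanSpace ℝ (Fin n) → EuclideanSpace ℝ (Fin n))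
    (hfY : Set.MapsTo f Y Y)
    (hLip : ∀ a ∈ Y, ∀ b ∈ Y, dist (f a) (f b) ≤ c * dist a b)
    (T : ℕ) (x : ℕ → EuclideanSpace ℝ (Fin n))
    (hxY : ∀ t, t < T → x t ∈ Y)
    (htraj : ∀ t, x (t + 1) = f (x t))
    (hdense : ∀ y ∈ Y, ∃ t, t + 1 < T ∧ dist y (x t) ≤ δ)
    (hδ : δ ≤ ε / 2 * min 1 (1 / c))
    (y : EuclideanSpace ℝ (Fin n)) (hy : y ∈ Y) :
    (∃ t, t + 1 < T ∧
      (∀ l ∈ L, y ∈ A l →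
        dist (x t) l ≤ L.inf' hL (fun m => dist (x t) m) + ε) ∧
      (∀ l' ∈ L, f y ∈ A l' →
        dist (x (t + 1)) l' ≤ L.inf' hL (fun m => dist (x (t + 1)) m) + ε)) ∧
    f y ∈ ⋂ l ∈ {l | l ∈ L ∧ y ∈ A l},
      ⋃ l' ∈ {l' | l' ∈ L ∧ ∃ t, t + 1 < T ∧
          dist (x t) l ≤ L.inf' hL (fun m => dist (x t) m) + ε ∧
          dist (x (t + 1)) l' ≤ L.inf' hL (fun m => dist (x (t + 1)) m) + ε},
        A l' := by

  have hδε : δ ≤ ε / 2 := by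
    have : Min.min 1 (1/c) ≤ 1 := min_le_left _ _
    nlinarith
  have hcδ : c * δ ≤ ε / 2 := by
    have h1 : δ ≤ ε / 2 * (1 / c) := le_trans hδ (by
      have : Min.min 1 (1/c) ≤ 1/c := min_le_right _ _
      nlinarith)
    have := mul_le_mul_of_nonneg_left h1 hc.le
    calc c * δ ≤ c * (ε / 2 * (1 / c)) := this
      _ = ε / 2 := by field_simp
  have key : ∀ (z w : EuclideanSpace ℝ (Fin n)) (η : ℝ), dist z w ≤ η → 2 * η ≤ ε →
      ∀ l ∈ L, (∀ l' ∈ L, dist z l ≤ dist z l') →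
      dist w l ≤ L.inf' hL (fun m => dist w m) + ε := by
    intro z w η hzw hηε l hl hwit
    obtain ⟨m, hm, hmeq⟩ := L.exists_mem_eq_inf' hL (fun m => dist w m)
    rw [hmeq]
    have h1 : dist w l ≤ dist w z + dist z l := dist_triangle _ _ _
    have h2 : dist z l ≤ dist z m := hwit m hm
    have h3 : dist z m ≤ dist z w + dist w m := dist_triangle _ _ _
    have h4 : dist w z = dist z w := dist_comm _ _
    linarith
  obtain ⟨t, htT, hyt⟩ := hdense y hy
  have hxtY : x t ∈ Y := hxY t (Nat.lt_of_succ_lt htT)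
  have hfdist : dist (f y) (x (t + 1)) ≤ c * δ := by
    rw [htraj t]
    calc dist (f y) (f (x t)) ≤ c * dist y (x t) := hLip y hy (x t) hxtY
      _ ≤ c * δ := mul_le_mul_of_nonneg_left hyt hc.le
  have Amem : ∀ (v l : EuclideanSpace ℝ (Fin n)), v ∈ A l → ∀ l' ∈ L, dist v l ≤ dist v l' := by
    intro v l hv
    rw [hA l] at hv
    exact hv.2
  have main : ∃ t, t + 1 < T ∧
      (∀ l ∈ L, y ∈ A l →
        dist (x t) l ≤ L.inf' hL (fun m => dist (x t) m) + ε) ∧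
      (∀ l' ∈ L, f y ∈ A l' →
        dist (x (t + 1)) l' ≤ L.inf' hL (fun m => dist (x (t + 1)) m) + ε) := by
    refine ⟨t, htT, ?_, ?_⟩
    · intro l hl hyl
      exact key y (x t) δ hyt (by linarith) l hl (Amem y l hyl)
    · intro l' hl' hfyl
      exact key (f y) (x (t + 1)) (c * δ) hfdist (by linarith) l' hl' (Amem (f y) l' hfyl)
  refine ⟨main, ?_⟩
  have hfyY : f y ∈ Y := hfY hy
  rw [hY] at hfyY
  simp only [Set.mem_iUnion] at hfyY
  obtain ⟨l'', hl'', hfyA⟩ := hfyY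
  obtain ⟨t, htT', h1, h2⟩ := main
  simp only [Set.mem_iInter, Set.mem_iUnion, Set.mem_setOf_eq]
  intro l hlmem
  exact ⟨l'', ⟨hl'', t, htT', h1 l hlmem.1 hlmem.2, h2 l'' hl'' hfyA⟩, hfyA⟩
end

section
/- Let 𝒜 be a finite grid and F : 𝒜 → Set 𝒜 a combinatorial multivalued map. The iteration S₀ = N, S_{k+1} = F(S_k) ∩ S_k ∩ F⁻¹(S_k) (applied elementwise to sets of cells) terminates in at most |N| steps at a fixed point S*, and S* equals the combinatorial invariant part inv(N, F) = { A ∈ N : there exists a bi-infinite sequence (Aⁿ)_{n∈ℤ} in N with A⁰ = A and A^{n+1} ∈ F(Aⁿ) for all n }. -/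
/-- for a combinatorial multivalued map `F` on a finite grid, the
iteration `S₀ = N`, `S_{k+1} = F(S_k) ∩ S_k ∩ F⁻¹(S_k)` reaches a fixed point
`S*` in at most `|N|` steps, and `S*` equals the combinatorial invariant part
`inv(N,F) = { A ∈ N : ∃ bi-infinite trajectory through A staying in N }`. -/
theorem invariantPart_algorithm_correct
    {α : Type*} [Fintype α] [DecidableEq α]
    (F : α → Finset α) (N : Finset α)
    (step : Finset α → Finset α)
    (hstep : ∀ S : Finset α, step S =
      (S.biUnion F) ∩ S ∩ (Finset.univ.filter fun A => ((F A) ∩ S).Nonempty)) :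
    step (step^[N.card] N) = step^[N.card] N ∧
    (↑(step^[N.card] N) : Set α) =
      {A : α | A ∈ N ∧ ∃ g : ℤ → α, g 0 = A ∧
        ∀ m : ℤ, g m ∈ N ∧ g (m + 1) ∈ F (g m)} := by
  classical
  have hsub : ∀ S, step S ⊆ S := by
    intro S x hx
    rw [hstep] at hx
    exact (Finset.mem_inter.1 (Finset.mem_inter.1 hx).1).2
  have hmono : ∀ S T : Finset α, S ⊆ T → step S ⊆ step T := by
    intro S T h x hx
    rw [hstep] at hx ⊢
    simp only [Finset.mem_inter, Finset.mem_biUnion, Finset.mem_filter] at hx ⊢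
    obtain ⟨⟨⟨B, hB, hxB⟩, hxS⟩, -, hne⟩ := hx
    exact ⟨⟨⟨B, h hB, hxB⟩, h hxS⟩, Finset.mem_univ x,
      hne.mono (Finset.inter_subset_inter le_rfl h)⟩
  have hfix : step (step^[N.card] N) = step^[N.card] N := by
    have key : ∀ k, step (step^[k] N) = step^[k] N ∨ (step^[k] N).card + k ≤ N.card := by
      intro k
      induction k with
      | zero => right; simp
      | succ k ih =>
        rcases ih with h | h
        · left
          rw [Function.iterate_succ_apply', h, h]
        · by_cases hf : step (step^[k] N) = step^[k] N
          · left
            rw [Function.iterate_succ_apply', hf, hf]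
          · right
            rw [Function.iterate_succ_apply']
            have hlt : (step (step^[k] N)).card < (step^[k] N).card :=
              Finset.card_lt_card (lt_of_le_of_ne (hsub _) hf)
            omega
    rcases key N.card with h | h
    · exact h
    · have hc : (step^[N.card] N).card = 0 := by omega
      have he : step^[N.card] N = ∅ := Finset.card_eq_zero.1 hc
      rw [he]
      exact Finset.subset_empty.1 (hsub ∅)
  refine ⟨hfix, ?_⟩
  set S : Finset α := step^[N.card] N with hSdef
  have hiter_sub : ∀ k, step^[k] N ⊆ N := by
    intro k
    induction k with
    | zero => simp
    | succ k ih =>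
      rw [Function.iterate_succ_apply']
      exact (hsub _).trans ih
  have hSN : S ⊆ N := hiter_sub _
  have hSprop : ∀ B ∈ S, (∃ C ∈ S, B ∈ F C) ∧ (F B ∩ S).Nonempty := by
    intro B hB
    have hB' : B ∈ step S := by rw [hfix]; exact hB
    rw [hstep] at hB'
    simp only [Finset.mem_inter, Finset.mem_biUnion, Finset.mem_filter] at hB'
    exact ⟨hB'.1.1, hB'.2.2⟩
  ext A
  simp only [Finset.coe_sort_coe, Set.mem_setOf_eq, Finset.mem_coe]
  constructor
  · -- A ∈ S → A is in the invariant part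
    intro hA
    refine ⟨hSN hA, ?_⟩
    set fwd : α → α := fun B => if h : (F B ∩ S).Nonempty then h.choose else B with hfwddef
    set bwd : α → α := fun B => if h : ∃ C ∈ S, B ∈ F C then h.choose else B with hbwddef
    have hfwd : ∀ B ∈ S, fwd B ∈ F B ∧ fwd B ∈ S := by
      intro B hB
      have h := (hSprop B hB).2
      rw [hfwddef]
      simp only [dif_pos h]
      have := h.choose_spec
      rw [Finset.mem_inter] at this
      exact this
    have hbwd : ∀ B ∈ S, bwd B ∈ S ∧ B ∈ F (bwd B) := by
      intro B hB
      have h := (hSprop B hB).1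
      rw [hbwddef]
      simp only [dif_pos h]
      exact h.choose_spec
    have hfS : ∀ k, fwd^[k] A ∈ S := by
      intro k
      induction k with
      | zero => simpa
      | succ k ih =>
        rw [Function.iterate_succ_apply']
        exact (hfwd _ ih).2
    have hbS : ∀ k, bwd^[k] A ∈ S := by
      intro k
      induction k with
      | zero => simpa
      | succ k ih =>
        rw [Function.iterate_succ_apply']
        exact (hbwd _ ih).1
    refine ⟨fun n => if 0 ≤ n then fwd^[n.toNat] A else bwd^[(-n).toNat] A, by simp, ?_⟩
    intro m
    constructor
    · by_cases hm : 0 ≤ m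
      · simp only [if_pos hm]
        exact hSN (hfS _)
      · simp only [if_neg hm]
        exact hSN (hbS _)
    · rcases lt_trichotomy m (-1) with hm | hm | hm
      · have hm1 : ¬ (0 ≤ m) := by omega
        have hm2 : ¬ (0 ≤ m + 1) := by omega
        have hk : (-m).toNat = (-(m+1)).toNat + 1 := by omega
        simp only [if_neg hm1, if_neg hm2, hk, Function.iterate_succ_apply']
        exact (hbwd _ (hbS _)).2
      · subst hm
        norm_num
        exact (hbwd A hA).2
      · have hm1 : 0 ≤ m := by omega
        have hm2 : 0 ≤ m + 1 := by omega
        have hk : (m + 1).toNat = m.toNat + 1 := by omega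
        simp only [if_pos hm1, if_pos hm2, hk, Function.iterate_succ_apply']
        exact (hfwd _ (hfS _)).1
  · -- invariant part ⊆ S
    rintro ⟨hAN, g, hg0, hg⟩
    set I : Finset α := N.filter (fun B => ∃ g : ℤ → α, g 0 = B ∧
        ∀ m : ℤ, g m ∈ N ∧ g (m + 1) ∈ F (g m)) with hIdef
    have hmemI : ∀ (B : α) (g : ℤ → α), g 0 = B →
        (∀ m : ℤ, g m ∈ N ∧ g (m + 1) ∈ F (g m)) → B ∈ I := by
      intro B g hg0 hg
      rw [hIdef, Finset.mem_filter]
      exact ⟨hg0 ▸ (hg 0).1, g, hg0, hg⟩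
    have hIstep : I ⊆ step I := by
      intro B hB
      rw [hIdef, Finset.mem_filter] at hB
      obtain ⟨hBN, g, hg0, hg⟩ := hB
      rw [hstep]
      simp only [Finset.mem_inter, Finset.mem_biUnion, Finset.mem_filter]
      refine ⟨⟨⟨g (-1), ?_, ?_⟩, hmemI B g hg0 hg⟩, Finset.mem_univ B, ⟨g 1, ?_⟩⟩
      · refine hmemI (g (-1)) (fun n => g (n - 1)) (by norm_num) ?_
        intro m
        have h1 : m + 1 - 1 = m := by ring
        have h2 : m - 1 + 1 = m := by ring
        refine ⟨(hg (m - 1)).1, ?_⟩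
        show g (m + 1 - 1) ∈ F (g (m - 1))
        rw [h1]
        have := (hg (m - 1)).2
        rwa [h2] at this
      · have := (hg (-1)).2
        norm_num at this
        rwa [hg0] at this
      · rw [Finset.mem_inter]
        have h1 := (hg 0).2
        rw [hg0] at h1
        norm_num at h1
        refine ⟨h1, ?_⟩
        refine hmemI (g 1) (fun n => g (n + 1)) (by norm_num) ?_
        intro m
        exact ⟨(hg (m + 1)).1, (hg (m + 1)).2⟩
    have hIk : ∀ k, I ⊆ step^[k] N := by
      intro k
      induction k with
      | zero =>
        simp only [Function.iterate_zero, id_eq]; exact Finset.filter_subset _ N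
      | succ k ih =>
        rw [Function.iterate_succ_apply']
        exact hIstep.trans (hmono _ _ ih)
    exact hIk N.card (hmemI A g hg0 hg)
end
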